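/- arXiv:2111.13745 — 2 statements merged into one kernel-verified Lean document; each statement's English description precedes it below -/
import Mathlib

section
/- Let p ≥ 2 be an integer, I ⊆ {0,1,...,p−1}, and n ≥ 1. The n-fold iterate g_{p,I}^n has exactly p^n fixed points in [0,1], and if x_0 < x_1 < ... < x_{p^n−1} denote these fixed points in increasing order, then for 0 ≤ k < p^n one has x_k = k/(p^n − 1) if k ∈ I_{p^n}, and x_k = (k+1)/(p^n + 1) otherwise. -/
/-- The (not necessarily continuous) piecewise linear map `g_{p,I} : [0,1] → [0,1]`:
on `[k/p, (k+1)/p)` it is `x ↦ p·x − k` if `k ∈ I` and `x ↦ k + 1 − p·x` if `k ∉ I`,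
with `g_{p,I}(1) = 1` if `p − 1 ∈ I` and `g_{p,I}(1) = 0` otherwise. -/
noncomputable def gpI (p : ℕ) (I : Finset ℕ) (x : ℝ) : ℝ :=
  if x = 1 then (if p - 1 ∈ I then 1 else 0)
  else if (⌊(p : ℝ) * x⌋).toNat ∈ I then (p : ℝ) * x - (⌊(p : ℝ) * x⌋).toNat
  else ((⌊(p : ℝ) * x⌋).toNat : ℝ) + 1 - (p : ℝ) * x

/-- `I_{p^n}` is the set of indices `k < p^n` such that the `n`-fold iterate of `g_{p,I}`
is increasing on `(k/p^n, (k+1)/p^n)`, where it is given by `x ↦ p^n·x − k`. -/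
def ISet (p : ℕ) (I : Finset ℕ) (n : ℕ) : Set ℕ :=
  {k | k < p ^ n ∧ ∀ x ∈ Set.Ioo ((k : ℝ) / (p : ℝ) ^ n) (((k : ℝ) + 1) / (p : ℝ) ^ n),
    (gpI p I)^[n] x = (p : ℝ) ^ n * x - (k : ℝ)}


/-!
On each interval `(k/p^n, (k+1)/p^n)` the iterate `(gpI p I)^[n]` is the affine map
`x ↦ p^n x - k` or `x ↦ k + 1 - p^n x`, whose unique fixed point is `k/(p^n - 1)`, resp.
`(k+1)/(p^n + 1)`. The second always lies inside the interval, the first unless `k = 0` or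
`k = p^n - 1`, where it is the endpoint `0` or `1` and the iterate still takes the branch's value
there. The remaining points `m/p^n`, `0 < m < p^n`, are mapped into `{0, 1}` and so are not fixed.
Hence every branch contributes exactly one fixed point, and these increase with `k`.
-/

open Set Function

theorem Nat.exists_eq_pow_mul_add_of_lt_pow_succ {p n k : ℕ} (hk : k < p ^ (n + 1)) :
    ∃ j < p, ∃ r < p ^ n, k = p ^ n * j + r := by
  have hpn : 0 < p ^ n := Nat.pos_of_ne_zero fun h => by simp [pow_succ, h] at hk
  refine ⟨k / p ^ n, ?_, k % p ^ n, Nat.mod_lt _ hpn, (Nat.div_add_mod k _).symm⟩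
  rwa [Nat.div_lt_iff_lt_mul hpn, ← pow_succ']

def branchMap (N k : ℝ) (b : Bool) (x : ℝ) : ℝ :=
  if b then N * x - k else k + 1 - N * x

noncomputable def branchFixedPt (N k : ℝ) (b : Bool) : ℝ :=
  if b then k / (N - 1) else (k + 1) / (N + 1)

section Branch

variable {N k x : ℝ} {b : Bool}

theorem mem_Ioo_div_iff (hN : 0 < N) :
    x ∈ Ioo (k / N) ((k + 1) / N) ↔ k < N * x ∧ N * x < k + 1 := by
  rw [mem_Ioo, div_lt_iff₀ hN, lt_div_iff₀ hN, mul_comm x]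

theorem one_sub_mem_Ioo_div (hN : 0 < N) (hx : x ∈ Ioo (k / N) ((k + 1) / N)) :
    1 - x ∈ Ioo ((N - 1 - k) / N) ((N - 1 - k + 1) / N) := by
  rw [mem_Ioo_div_iff hN] at hx ⊢
  constructor <;> linarith [hx.1, hx.2]

theorem branchMap_eq_self_iff (hN : 1 < N) : branchMap N k b x = x ↔ x = branchFixedPt N k b := by
  cases b <;> simp only [branchMap, branchFixedPt, Bool.false_eq_true, if_true, if_false] <;>
    rw [eq_div_iff (by linarith)] <;> constructor <;> intro h <;> linarith

theorem branchFixedPt_mem_Icc (hN : 1 < N) (hk : 0 ≤ k) (hkN : k + 1 ≤ N) :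
    branchFixedPt N k b ∈ Icc 0 1 := by
  cases b <;> simp only [branchFixedPt, Bool.false_eq_true, if_true, if_false] <;>
    exact ⟨by apply div_nonneg <;> linarith, by rw [div_le_one (by linarith)]; linarith⟩

theorem branchFixedPt_lt_succ (hk : 0 ≤ k) (hkN : k + 2 ≤ N) (b b' : Bool) :
    branchFixedPt N k b < branchFixedPt N (k + 1) b' := by
  cases b <;> cases b' <;> simp only [branchFixedPt, Bool.false_eq_true, if_true, if_false] <;>
    rw [div_lt_div_iff₀ (by linarith) (by linarith)] <;> nlinarith

theorem branchFixedPt_mem_Ioo (hk : 0 ≤ k) (hkN : k + 1 ≤ N) (hb : b → 0 < k ∧ k + 1 < N) :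
    branchFixedPt N k b ∈ Ioo (k / N) ((k + 1) / N) := by
  rw [mem_Ioo_div_iff (by linarith)]
  cases b
  · simp only [branchFixedPt, Bool.false_eq_true, if_false]
    rw [mul_div_assoc', lt_div_iff₀ (by linarith), div_lt_iff₀ (by linarith)]
    constructor <;> nlinarith
  · obtain ⟨hk0, hkN'⟩ := hb rfl
    simp only [branchFixedPt, if_true]
    rw [mul_div_assoc', lt_div_iff₀ (by linarith), div_lt_iff₀ (by linarith)]
    constructor <;> nlinarith

end Branch

section gpI

variable {p : ℕ} {I : Finset ℕ}

theorem gpI_zero : gpI p I 0 = if 0 ∈ I then 0 else 1 := by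
  simp [gpI]

theorem gpI_one : gpI p I 1 = if p - 1 ∈ I then 1 else 0 := by
  simp [gpI]

theorem gpI_eq {j : ℕ} (hj : j < p) {x : ℝ} (hjx : j ≤ p * x) (hxj : p * x < j + 1) :
    gpI p I x = if j ∈ I then p * x - j else j + 1 - p * x := by
  have hx : x ≠ 1 := by
    rintro rfl
    have : p < j + 1 := by exact_mod_cast (by simpa using hxj : (p : ℝ) < j + 1)
    omega
  have hfloor : ⌊(p : ℝ) * x⌋ = j := by
    rw [Int.floor_eq_iff]; exact ⟨mod_cast hjx, mod_cast hxj⟩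
  simp [gpI, hx, hfloor]

variable (p I) in
/-- The `k`-th branch of `(gpI p I)^[n]` is increasing iff `upBranch p I n k`. Since
`(gpI p I)^[n+1] = (gpI p I)^[n] ∘ gpI p I`, branch `p^n * j + r` of level `n + 1` is mapped by
`gpI p I` onto branch `r` of level `n`, increasingly if `j ∈ I` and otherwise decreasingly onto
branch `p^n - 1 - r`. -/
def upBranch : ℕ → ℕ → Bool
  | 0, _ => true
  | n + 1, k => if k / p ^ n ∈ I then upBranch n (k % p ^ n)
      else !upBranch n (p ^ n - 1 - k % p ^ n)

theorem upBranch_succ {n j r : ℕ} (hr : r < p ^ n) :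
    upBranch p I (n + 1) (p ^ n * j + r) =
      if j ∈ I then upBranch p I n r else !upBranch p I n (p ^ n - 1 - r) := by
  have hpn : 0 < p ^ n := by omega
  simp only [upBranch, Nat.mul_add_div hpn, Nat.div_eq_of_lt hr, add_zero, Nat.mul_add_mod,
    Nat.mod_eq_of_lt hr]

theorem iterate_gpI_eq_branchMap (hp : 0 < p) {n k : ℕ} (hk : k < p ^ n) {x : ℝ}
    (hx : x ∈ Ioo ((k : ℝ) / (p : ℝ) ^ n) ((k + 1) / (p : ℝ) ^ n)) :
    (gpI p I)^[n] x = branchMap ((p : ℝ) ^ n) k (upBranch p I n k) x := by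
  induction n generalizing k x with
  | zero =>
    obtain rfl : k = 0 := by simpa using hk
    simp [branchMap, upBranch]
  | succ n ih =>
    obtain ⟨j, hj, r, hr, rfl⟩ := Nat.exists_eq_pow_mul_add_of_lt_pow_succ hk
    have hrq : (r : ℝ) + 1 ≤ (p : ℝ) ^ n := by exact_mod_cast (hr : r + 1 ≤ p ^ n)
    set q : ℝ := (p : ℝ) ^ n
    have hq : 0 < q := by positivity
    have hpow : (p : ℝ) ^ (n + 1) * x = q * (p * x) := by ring
    rw [mem_Ioo_div_iff (by positivity), hpow] at hx
    push_cast at hx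
    have hy : p * x - j ∈ Ioo (r / q) ((r + 1) / q) := by
      rw [mem_Ioo_div_iff hq]; constructor <;> nlinarith [hx.1, hx.2]
    have hjx : (j : ℝ) ≤ p * x := by nlinarith [hx.1]
    have hxj : p * x < j + 1 := by nlinarith [hx.2]
    have hcast : ((p ^ n - 1 - r : ℕ) : ℝ) = q - 1 - r := by
      rw [Nat.cast_sub (by omega), Nat.cast_sub (by omega)]; simp [q]
    rw [iterate_succ_apply, gpI_eq hj hjx hxj, upBranch_succ hr]
    split_ifs with hjI
    · rw [ih hr hy]
      cases upBranch p I n r <;> simp only [branchMap] <;> push_cast <;> ring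
    · have hy' := one_sub_mem_Ioo_div hq hy
      rw [← hcast] at hy'
      rw [show (j : ℝ) + 1 - p * x = 1 - (p * x - j) by ring, ih (by omega) hy', hcast]
      cases upBranch p I n (p ^ n - 1 - r) <;>
        simp only [branchMap, Bool.not_false, Bool.not_true, Bool.false_eq_true, if_true,
          if_false] <;> push_cast <;> ring

theorem iterate_gpI_zero_and_one (hp : 0 < p) (n : ℕ) :
    (gpI p I)^[n] 0 = (if upBranch p I n 0 then 0 else 1) ∧
      (gpI p I)^[n] 1 = if upBranch p I n (p ^ n - 1) then 1 else 0 := by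
  induction n with
  | zero => simp [upBranch]
  | succ n ih =>
    have hpn : 0 < p ^ n := by positivity
    have hzero : upBranch p I (n + 1) 0 =
        if 0 ∈ I then upBranch p I n 0 else !upBranch p I n (p ^ n - 1) := by
      simpa using upBranch_succ (I := I) (j := 0) hpn
    have hlast : p ^ (n + 1) - 1 = p ^ n * (p - 1) + (p ^ n - 1) := by
      rw [pow_succ, Nat.mul_sub_one]
      have : p ^ n ≤ p ^ n * p := Nat.le_mul_of_pos_right _ hp
      omega
    have hone : upBranch p I (n + 1) (p ^ (n + 1) - 1) =
        if p - 1 ∈ I then upBranch p I n (p ^ n - 1) else !upBranch p I n 0 := by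
      rw [hlast, upBranch_succ (by omega), Nat.sub_self]
    rw [iterate_succ_apply, iterate_succ_apply, gpI_zero, gpI_one, hzero, hone]
    constructor
    · by_cases h0 : 0 ∈ I
      · simp only [h0, if_true, ih.1]
      · simp only [h0, if_false, ih.2]
        cases upBranch p I n (p ^ n - 1) <;> rfl
    · by_cases h1 : p - 1 ∈ I
      · simp only [h1, if_true, ih.2]
      · simp only [h1, if_false, ih.1]
        cases upBranch p I n 0 <;> rfl

variable (p) in
def gridPoints (n : ℕ) : Set ℝ :=
  (fun m : ℕ => (m : ℝ) / (p : ℝ) ^ n) '' Iic (p ^ n)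

theorem gpI_mapsTo_gridPoints (hp : 0 < p) (n : ℕ) :
    MapsTo (gpI p I) (gridPoints p (n + 1)) (gridPoints p n) := by
  have hq : (0 : ℝ) < (p : ℝ) ^ n := by positivity
  have zero_mem : (0 : ℝ) ∈ gridPoints p n := ⟨0, by simp, by simp⟩
  have one_mem : (1 : ℝ) ∈ gridPoints p n :=
    ⟨p ^ n, mem_Iic.2 le_rfl, by push_cast; exact div_self hq.ne'⟩
  rintro _ ⟨m, hm, rfl⟩
  dsimp only
  rcases (mem_Iic.1 hm).eq_or_lt with rfl | hm
  · rw [Nat.cast_pow, div_self (by positivity), gpI_one]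
    split_ifs
    exacts [one_mem, zero_mem]
  obtain ⟨j, hj, r, hr, rfl⟩ := Nat.exists_eq_pow_mul_add_of_lt_pow_succ hm
  have hrq : (r : ℝ) < (p : ℝ) ^ n := by exact_mod_cast hr
  have hpx :
    (p : ℝ) * (((p ^ n * j + r : ℕ) : ℝ) / (p : ℝ) ^ (n + 1)) = j + r / (p : ℝ) ^ n := by
    push_cast; field_simp; ring
  have hr0 : 0 ≤ (r : ℝ) / (p : ℝ) ^ n := by positivity
  have hr1 : (r : ℝ) / (p : ℝ) ^ n < 1 := (div_lt_one hq).2 hrq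
  rw [gpI_eq hj (by rw [hpx]; linarith) (by rw [hpx]; linarith), hpx]
  split_ifs
  · exact ⟨r, hr.le, by ring⟩
  · refine ⟨p ^ n - r, Nat.sub_le _ _, ?_⟩
    dsimp only
    rw [Nat.cast_sub hr.le]; push_cast; field_simp; ring

theorem iterate_gpI_mapsTo_gridPoints (hp : 0 < p) (n : ℕ) :
    MapsTo (gpI p I)^[n] (gridPoints p n) {0, 1} := by
  induction n with
  | zero =>
    rintro _ ⟨m, hm, rfl⟩
    have hm : m ≤ 1 := by simpa using hm
    interval_cases m <;> simp
  | succ n ih =>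
    rw [iterate_succ]
    exact ih.comp (gpI_mapsTo_gridPoints hp n)

theorem iterate_gpI_ne_self_of_mem_gridPoints (hp : 0 < p) {n : ℕ} {y : ℝ}
    (hy : y ∈ gridPoints p n) (hy0 : 0 < y) (hy1 : y < 1) : (gpI p I)^[n] y ≠ y := by
  intro hfix
  have h := iterate_gpI_mapsTo_gridPoints (I := I) hp n hy
  rw [hfix, mem_insert_iff, mem_singleton_iff] at h
  rcases h with rfl | rfl <;> linarith

theorem iterate_gpI_branchFixedPt {n : ℕ} (hp : 1 < p) (hn : n ≠ 0) {k : ℕ} (hk : k < p ^ n) :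
    (gpI p I)^[n] (branchFixedPt ((p : ℝ) ^ n) k (upBranch p I n k)) =
      branchFixedPt ((p : ℝ) ^ n) k (upBranch p I n k) := by
  have hN : 1 < (p : ℝ) ^ n := one_lt_pow₀ (mod_cast hp) hn
  have hkN : (k : ℝ) + 1 ≤ (p : ℝ) ^ n := by exact_mod_cast (hk : k + 1 ≤ p ^ n)
  obtain ⟨hzero, hone⟩ := iterate_gpI_zero_and_one (I := I) (by omega : 0 < p) n
  by_cases hinner : upBranch p I n k → 0 < (k : ℝ) ∧ (k : ℝ) + 1 < (p : ℝ) ^ n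
  · rw [iterate_gpI_eq_branchMap (by omega) hk
      (branchFixedPt_mem_Ioo (Nat.cast_nonneg k) hkN hinner)]
    exact (branchMap_eq_self_iff hN).2 rfl
  push Not at hinner
  obtain ⟨hup, hedge⟩ := hinner
  rcases Nat.eq_zero_or_pos k with rfl | hk0
  · simp [branchFixedPt, hup, hzero]
  obtain rfl : k = p ^ n - 1 := by
    have : p ^ n ≤ k + 1 := by exact_mod_cast hedge (mod_cast hk0)
    omega
  rw [hup, Nat.cast_pred (by omega)]
  simp [branchFixedPt, div_self (sub_ne_zero.2 hN.ne'), hone, hup]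

theorem exists_branchFixedPt_eq_of_iterate_gpI_eq {n : ℕ} (hp : 1 < p) (hn : n ≠ 0) {y : ℝ}
    (hy : y ∈ Icc 0 1) (hfix : (gpI p I)^[n] y = y) :
    ∃ k < p ^ n, branchFixedPt ((p : ℝ) ^ n) k (upBranch p I n k) = y := by
  have hN : 1 < (p : ℝ) ^ n := one_lt_pow₀ (mod_cast hp) hn
  have hpn : 0 < p ^ n := by positivity
  obtain ⟨hzero, hone⟩ := iterate_gpI_zero_and_one (I := I) (by omega : 0 < p) n
  rcases hy.1.eq_or_lt with rfl | hy0
  · have hup : upBranch p I n 0 = true := by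
      by_contra h
      rw [hfix, if_neg h] at hzero
      exact zero_ne_one hzero
    exact ⟨0, hpn, by simp [branchFixedPt, hup]⟩
  rcases hy.2.eq_or_lt with rfl | hy1
  · have hup : upBranch p I n (p ^ n - 1) = true := by
      by_contra h
      rw [hfix, if_neg h] at hone
      exact one_ne_zero hone
    refine ⟨p ^ n - 1, by omega, ?_⟩
    rw [hup, Nat.cast_pred hpn]
    simp [branchFixedPt, div_self (sub_ne_zero.2 hN.ne')]
  set k := ⌊(p : ℝ) ^ n * y⌋₊
  have hky : (k : ℝ) ≤ (p : ℝ) ^ n * y := Nat.floor_le (by positivity)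
  have hyk : (p : ℝ) ^ n * y < k + 1 := Nat.lt_floor_add_one _
  have hk : k < p ^ n := by
    have : (k : ℝ) < ((p ^ n : ℕ) : ℝ) := by push_cast; nlinarith
    exact_mod_cast this
  rcases hky.eq_or_lt with hgrid | hky
  · refine absurd hfix (iterate_gpI_ne_self_of_mem_gridPoints (by omega) ?_ hy0 hy1)
    exact ⟨k, mem_Iic.2 hk.le, by dsimp only; rw [hgrid]; field_simp⟩
  refine ⟨k, hk, ((branchMap_eq_self_iff hN).1 ?_).symm⟩
  have hy : y ∈ Ioo ((k : ℝ) / (p : ℝ) ^ n) ((k + 1) / (p : ℝ) ^ n) :=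
    (mem_Ioo_div_iff (by positivity)).2 ⟨hky, hyk⟩
  rw [← iterate_gpI_eq_branchMap (by omega) hk hy, hfix]

theorem mem_ISet_iff (hp : 0 < p) {n k : ℕ} (hk : k < p ^ n) :
    k ∈ ISet p I n ↔ upBranch p I n k = true := by
  have hq : (0 : ℝ) < (p : ℝ) ^ n := by positivity
  refine ⟨fun hmem => ?_, fun hup => ⟨hk, fun x hx => ?_⟩⟩
  · by_contra hup
    -- not the midpoint, where the two branches cross
    set x : ℝ := (k + 1 / 4) / (p : ℝ) ^ n
    have hqx : (p : ℝ) ^ n * x = k + 1 / 4 := mul_div_cancel₀ _ hq.ne'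
    have hx : x ∈ Ioo ((k : ℝ) / (p : ℝ) ^ n) ((k + 1) / (p : ℝ) ^ n) := by
      rw [mem_Ioo_div_iff hq, hqx]; constructor <;> linarith
    have h := hmem.2 x hx
    rw [iterate_gpI_eq_branchMap hp hk hx, branchMap, if_neg hup, hqx] at h
    linarith
  · rw [iterate_gpI_eq_branchMap hp hk hx, branchMap, if_pos hup]

end gpI

open scoped Classical in
theorem fixedPoints_gpI_iterate_general (p n : ℕ) (hp : 2 ≤ p) (hn : 1 ≤ n)
    (I : Finset ℕ) :
    {y ∈ Set.Icc (0 : ℝ) 1 | (gpI p I)^[n] y = y}.ncard = p ^ n ∧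
    ∃ x : ℕ → ℝ, StrictMonoOn x (Set.Iio (p ^ n)) ∧
      x '' Set.Iio (p ^ n) = {y ∈ Set.Icc (0 : ℝ) 1 | (gpI p I)^[n] y = y} ∧
      ∀ k < p ^ n, x k = if k ∈ ISet p I n then (k : ℝ) / ((p : ℝ) ^ n - 1)
        else ((k : ℝ) + 1) / ((p : ℝ) ^ n + 1) := by
  have hn0 : n ≠ 0 := by omega
  have hN : 1 < (p : ℝ) ^ n := one_lt_pow₀ (by exact_mod_cast hp) hn0
  set x : ℕ → ℝ := fun k => branchFixedPt ((p : ℝ) ^ n) k (upBranch p I n k)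
  have hmono : StrictMonoOn x (Iio (p ^ n)) := by
    refine strictMonoOn_of_lt_succ ordConnected_Iio fun k _ _ hk => ?_
    rw [Order.succ_eq_add_one, mem_Iio] at hk
    simp only [x]
    exact_mod_cast branchFixedPt_lt_succ (Nat.cast_nonneg k)
      (by exact_mod_cast (hk : k + 2 ≤ p ^ n)) _ _
  have himage : x '' Iio (p ^ n) = {y ∈ Icc (0 : ℝ) 1 | (gpI p I)^[n] y = y} := by
    ext y
    refine ⟨?_, fun hy => exists_branchFixedPt_eq_of_iterate_gpI_eq hp hn0 hy.1 hy.2⟩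
    rintro ⟨k, hk, rfl⟩
    have hkN : (k : ℝ) + 1 ≤ (p : ℝ) ^ n := by exact_mod_cast (hk : k + 1 ≤ p ^ n)
    exact ⟨branchFixedPt_mem_Icc hN (Nat.cast_nonneg k) hkN,
      iterate_gpI_branchFixedPt hp hn0 hk⟩
  refine ⟨?_, x, hmono, himage, fun k hk => ?_⟩
  · rw [← himage, hmono.injOn.ncard_image, ncard_Iio_nat]
  · simp only [x, branchFixedPt, mem_ISet_iff (by omega : 0 < p) hk]

open scoped Classical in
/-- `g_{p,I}^n` has exactly `p^n` fixed points in `[0,1]`, and listing them in increasing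
order as `x_0 < x_1 < ⋯ < x_{p^n−1}` one has `x_k = k/(p^n − 1)` if `k ∈ I_{p^n}` and
`x_k = (k+1)/(p^n + 1)` otherwise. -/
theorem fixedPoints_gpI_iterate (p n : ℕ) (hp : 2 ≤ p) (hn : 1 ≤ n)
    (I : Finset ℕ) (hI : ∀ i ∈ I, i < p) :
    {y ∈ Set.Icc (0 : ℝ) 1 | (gpI p I)^[n] y = y}.ncard = p ^ n ∧
    ∃ x : ℕ → ℝ, StrictMonoOn x (Set.Iio (p ^ n)) ∧
      x '' Set.Iio (p ^ n) = {y ∈ Set.Icc (0 : ℝ) 1 | (gpI p I)^[n] y = y} ∧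
      ∀ k < p ^ n, x k = if k ∈ ISet p I n then (k : ℝ) / ((p : ℝ) ^ n - 1)
        else ((k : ℝ) + 1) / ((p : ℝ) ^ n + 1) :=
  fixedPoints_gpI_iterate_general p n hp hn I
end

section
/- Let p ≥ 2 be an integer, I ⊆ {0,1,...,p−1}, n ≥ 2, and let k = a_1·p^{n−1} + a_2·p^{n−2} + ... + a_n with 0 ≤ a_i ≤ p−1. If a_1 ∈ I, then k ∈ I_{p^n} if and only if a_2·p^{n−2} + ... + a_n ∈ I_{p^{n−1}}. If a_1 ∉ I, then k ∈ I_{p^n} if and only if (p−1−a_2)·p^{n−2} + ... + (p−1−a_n) ∉ I_{p^{n−1}}. -/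
/-!
On the cell `(j/p^N, (j+1)/p^N)` the iterate `g^N` is one of the two affine bijections onto
`(0,1)`: the increasing `x ↦ p^N x − j` or the decreasing `x ↦ j + 1 − p^N x`, and not both.
Writing `j = a p^N + m` with `m < p^N`, the first application of `g` maps the cell of `j`
onto the cell of `m` by `x ↦ p x − a` when `a ∈ I`, and by `x ↦ 1 − (p x − a)` onto the cell
of `m' = p^N − 1 − m` when `a ∉ I`. So the branch of `g^(N+1)` on the cell of `j` is the branch
of `g^N` on the cell of `m`, resp. the opposite of the branch on the cell of `m'`.
-/

open Finset

theorem mul_pow_add_lt_pow_succ {p N a m : ℕ} (ha : a < p) (hm : m < p ^ N) :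
    a * p ^ N + m < p ^ (N + 1) := by
  rw [pow_succ]
  nlinarith

theorem sum_Icc_sub_one_mul_pow_add_one {p : ℕ} (hp : 0 < p) (l n : ℕ) :
    ∑ i ∈ Icc (l + 1) n, (p - 1) * p ^ (n - i) + 1 = p ^ (n - l) := by
  rw [← Ico_add_one_right_eq_Icc, sum_Ico_reflect (fun e => (p - 1) * p ^ e) _ le_rfl,
    Nat.sub_self, Nat.add_sub_add_right, Nat.Ico_zero_eq_range, ← mul_sum, mul_comm]
  simpa only [Nat.sub_one_add_one hp.ne'] using geom_sum_mul_add (p - 1) (n - l)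

theorem sum_Icc_sub_mul_pow_add_sum_Icc_mul_pow_add_one {p l n : ℕ} {d : ℕ → ℕ} (hp : 0 < p)
    (hd : ∀ i ∈ Icc (l + 1) n, d i < p) :
    ∑ i ∈ Icc (l + 1) n, (p - 1 - d i) * p ^ (n - i) +
      (∑ i ∈ Icc (l + 1) n, d i * p ^ (n - i) + 1) = p ^ (n - l) := by
  rw [← add_assoc, ← sum_add_distrib, ← sum_Icc_sub_one_mul_pow_add_one hp]
  congr 1
  refine sum_congr rfl fun i hi => ?_
  rw [← add_mul, Nat.sub_add_cancel (Nat.le_sub_one_of_lt (hd i hi))]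

namespace GpI

def cell (p N j : ℕ) : Set ℝ :=
  Set.Ioo ((j : ℝ) / (p : ℝ) ^ N) (((j : ℝ) + 1) / (p : ℝ) ^ N)

def IncOn (p : ℕ) (I : Finset ℕ) (N j : ℕ) : Prop :=
  ∀ x ∈ cell p N j, (gpI p I)^[N] x = (p : ℝ) ^ N * x - j

def DecOn (p : ℕ) (I : Finset ℕ) (N j : ℕ) : Prop :=
  ∀ x ∈ cell p N j, (gpI p I)^[N] x = j + 1 - (p : ℝ) ^ N * x

theorem mem_ISet_iff {p : ℕ} {I : Finset ℕ} {N k : ℕ} :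
    k ∈ ISet p I N ↔ k < p ^ N ∧ IncOn p I N k :=
  Iff.rfl

variable {p : ℕ} {I : Finset ℕ} {N a m m' j : ℕ} {x : ℝ}

theorem mem_cell_iff (hp : 0 < p) :
    x ∈ cell p N j ↔ (j : ℝ) < p ^ N * x ∧ p ^ N * x < j + 1 := by
  have hP : (0 : ℝ) < p ^ N := by positivity
  simp only [cell, Set.mem_Ioo, div_lt_iff₀ hP, lt_div_iff₀ hP, mul_comm x]

theorem one_sub_mem_cell (hp : 0 < p) (hmm' : m' + (m + 1) = p ^ N) {y : ℝ}
    (hy : y ∈ cell p N m) : 1 - y ∈ cell p N m' := by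
  have h : (m' : ℝ) + (m + 1) = p ^ N := by exact_mod_cast hmm'
  rw [mem_cell_iff hp] at hy ⊢
  rw [mul_one_sub]
  constructor <;> linarith [hy.1, hy.2]

theorem mem_cell_of_mem_cell_succ (hp : 0 < p) (hm : m < p ^ N)
    (hx : x ∈ cell p (N + 1) (a * p ^ N + m)) :
    (a : ℝ) ≤ p * x ∧ p * x < a + 1 ∧ p * x - a ∈ cell p N m := by
  have hP : (0 : ℝ) ≤ p ^ N := by positivity
  have hmR : (m : ℝ) + 1 ≤ p ^ N := by exact_mod_cast hm
  rw [mem_cell_iff hp] at hx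
  push_cast at hx
  have hy : (m : ℝ) < p ^ N * (p * x - a) ∧ p ^ N * (p * x - a) < m + 1 := by
    constructor <;> linarith [hx.1, hx.2, show (p : ℝ) ^ (N + 1) * x = p ^ N * (p * x) by ring]
  refine ⟨?_, ?_, (mem_cell_iff hp).2 hy⟩
  · nlinarith [m.cast_nonneg (α := ℝ)]
  · nlinarith

theorem gpI_eq_of_le_of_lt (ha : a < p) (h₁ : (a : ℝ) ≤ p * x) (h₂ : p * x < a + 1) :
    gpI p I x = if a ∈ I then p * x - a else 1 - (p * x - a) := by
  have haR : (a : ℝ) + 1 ≤ p := by exact_mod_cast ha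
  have hx : x ≠ 1 := by rintro rfl; linarith
  have hfloor : (⌊(p : ℝ) * x⌋).toNat = a := by
    rw [Int.floor_eq_iff.2 ⟨by exact_mod_cast h₁, by exact_mod_cast h₂⟩, Int.toNat_natCast]
  unfold gpI
  rw [if_neg hx, hfloor]
  split_ifs <;> ring

theorem iterate_succ_of_mem_cell_succ (hp : 0 < p) (ha : a < p) (hm : m < p ^ N)
    (hx : x ∈ cell p (N + 1) (a * p ^ N + m)) :
    (gpI p I)^[N + 1] x = (gpI p I)^[N] (if a ∈ I then p * x - a else 1 - (p * x - a)) := by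
  obtain ⟨h₁, h₂, -⟩ := mem_cell_of_mem_cell_succ hp hm hx
  rw [Function.iterate_succ_apply, gpI_eq_of_le_of_lt ha h₁ h₂]

theorem IncOn.succ_of_mem (hp : 0 < p) (ha : a < p) (haI : a ∈ I) (hm : m < p ^ N)
    (h : IncOn p I N m) : IncOn p I (N + 1) (a * p ^ N + m) := by
  intro x hx
  rw [iterate_succ_of_mem_cell_succ hp ha hm hx, if_pos haI,
    h _ (mem_cell_of_mem_cell_succ hp hm hx).2.2]
  push_cast
  ring

theorem DecOn.succ_of_mem (hp : 0 < p) (ha : a < p) (haI : a ∈ I) (hm : m < p ^ N)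
    (h : DecOn p I N m) : DecOn p I (N + 1) (a * p ^ N + m) := by
  intro x hx
  rw [iterate_succ_of_mem_cell_succ hp ha hm hx, if_pos haI,
    h _ (mem_cell_of_mem_cell_succ hp hm hx).2.2]
  push_cast
  ring

theorem DecOn.succ_of_not_mem (hp : 0 < p) (ha : a < p) (haI : a ∉ I)
    (hmm' : m' + (m + 1) = p ^ N) (h : DecOn p I N m') : IncOn p I (N + 1) (a * p ^ N + m) := by
  have hm : m < p ^ N := by omega
  have hmm'R : (m' : ℝ) + (m + 1) = p ^ N := by exact_mod_cast hmm'
  intro x hx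
  rw [iterate_succ_of_mem_cell_succ hp ha hm hx, if_neg haI,
    h _ (one_sub_mem_cell hp hmm' (mem_cell_of_mem_cell_succ hp hm hx).2.2)]
  push_cast
  linear_combination hmm'R

theorem IncOn.succ_of_not_mem (hp : 0 < p) (ha : a < p) (haI : a ∉ I)
    (hmm' : m' + (m + 1) = p ^ N) (h : IncOn p I N m') : DecOn p I (N + 1) (a * p ^ N + m) := by
  have hm : m < p ^ N := by omega
  have hmm'R : (m' : ℝ) + (m + 1) = p ^ N := by exact_mod_cast hmm'
  intro x hx
  rw [iterate_succ_of_mem_cell_succ hp ha hm hx, if_neg haI,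
    h _ (one_sub_mem_cell hp hmm' (mem_cell_of_mem_cell_succ hp hm hx).2.2)]
  push_cast
  linear_combination -hmm'R

theorem IncOn.not_decOn (hp : 0 < p) (hinc : IncOn p I N j) : ¬ DecOn p I N j := by
  intro hdec
  -- the two branches agree at the midpoint of the cell, so test at a third of it
  have hP : (p : ℝ) ^ N ≠ 0 := by positivity
  set x : ℝ := (j + 1 / 3) / p ^ N
  have hpx : (p : ℝ) ^ N * x = j + 1 / 3 := mul_div_cancel₀ _ hP
  have hx : x ∈ cell p N j := by
    rw [mem_cell_iff hp, hpx]
    constructor <;> linarith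
  have := (hinc x hx).symm.trans (hdec x hx)
  rw [hpx] at this
  linarith

theorem incOn_or_decOn (hp : 0 < p) : ∀ {N j : ℕ}, j < p ^ N → IncOn p I N j ∨ DecOn p I N j
  | 0, j, hj => Or.inl fun x _ => by simp [Nat.lt_one_iff.1 (by simpa using hj)]
  | N + 1, j, hj => by
    obtain ⟨a, m, ha, hm, rfl⟩ : ∃ a m, a < p ∧ m < p ^ N ∧ j = a * p ^ N + m :=
      ⟨j / p ^ N, j % p ^ N, Nat.div_lt_of_lt_mul (by rwa [← pow_succ]),
        Nat.mod_lt _ (by positivity), (Nat.div_add_mod' j _).symm⟩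
    by_cases haI : a ∈ I
    · exact (incOn_or_decOn hp hm).imp (·.succ_of_mem hp ha haI hm) (·.succ_of_mem hp ha haI hm)
    · have hmm' : p ^ N - (m + 1) + (m + 1) = p ^ N := Nat.sub_add_cancel hm
      exact (incOn_or_decOn hp (by omega : p ^ N - (m + 1) < p ^ N)).symm.imp
        (·.succ_of_not_mem hp ha haI hmm') (·.succ_of_not_mem hp ha haI hmm')

theorem mem_ISet_succ_iff_of_mem (hp : 0 < p) (ha : a < p) (haI : a ∈ I) (hm : m < p ^ N) :
    a * p ^ N + m ∈ ISet p I (N + 1) ↔ m ∈ ISet p I N := by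
  simp only [mem_ISet_iff, mul_pow_add_lt_pow_succ ha hm, hm, true_and]
  exact ⟨fun h => (incOn_or_decOn hp hm).resolve_right fun hdec =>
      h.not_decOn hp (hdec.succ_of_mem hp ha haI hm),
    fun h => h.succ_of_mem hp ha haI hm⟩

theorem mem_ISet_succ_iff_of_not_mem (hp : 0 < p) (ha : a < p) (haI : a ∉ I)
    (hmm' : m' + (m + 1) = p ^ N) :
    a * p ^ N + m ∈ ISet p I (N + 1) ↔ m' ∉ ISet p I N := by
  have hm' : m' < p ^ N := by omega
  simp only [mem_ISet_iff, mul_pow_add_lt_pow_succ ha (by omega : m < p ^ N), hm', true_and]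
  exact ⟨fun h hinc => h.not_decOn hp (hinc.succ_of_not_mem hp ha haI hmm'),
    fun h => ((incOn_or_decOn hp hm').resolve_left h).succ_of_not_mem hp ha haI hmm'⟩

end GpI

theorem ISet_recursion_general (p n : ℕ) (hp : 2 ≤ p) (hn : 2 ≤ n)
    (I : Finset ℕ)
    (a : ℕ → ℕ) (ha : ∀ i, 1 ≤ i → i ≤ n → a i < p)
    (k : ℕ) (hk : k = ∑ i ∈ Finset.Icc 1 n, a i * p ^ (n - i)) :
    (a 1 ∈ I →
      (k ∈ ISet p I n ↔ (∑ i ∈ Finset.Icc 2 n, a i * p ^ (n - i)) ∈ ISet p I (n - 1))) ∧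
    (a 1 ∉ I →
      (k ∈ ISet p I n ↔
        (∑ i ∈ Finset.Icc 2 n, (p - 1 - a i) * p ^ (n - i)) ∉ ISet p I (n - 1))) := by
  obtain ⟨N, rfl⟩ : ∃ N, n = N + 1 := ⟨n - 1, by omega⟩
  have hp₀ : 0 < p := by omega
  have ha1 : a 1 < p := ha 1 le_rfl (by omega)
  have hcompl : ∑ i ∈ Finset.Icc 2 (N + 1), (p - 1 - a i) * p ^ (N + 1 - i) +
      (∑ i ∈ Finset.Icc 2 (N + 1), a i * p ^ (N + 1 - i) + 1) = p ^ N :=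
    sum_Icc_sub_mul_pow_add_sum_Icc_mul_pow_add_one hp₀ (l := 1)
      fun i hi => ha i (one_le_two.trans (mem_Icc.1 hi).1) (mem_Icc.1 hi).2
  have hsplit : k = a 1 * p ^ N + ∑ i ∈ Finset.Icc 2 (N + 1), a i * p ^ (N + 1 - i) := by
    rw [hk, ← add_sum_Ioc_eq_sum_Icc (by omega), ← Icc_add_one_left_eq_Ioc,
      Nat.add_sub_cancel]
    rfl
  rw [Nat.add_sub_cancel, hsplit]
  exact ⟨fun haI => GpI.mem_ISet_succ_iff_of_mem hp₀ ha1 haI (by omega),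
    fun haI => GpI.mem_ISet_succ_iff_of_not_mem hp₀ ha1 haI hcompl⟩

/-- Recursive description of `I_{p^n}`: for `k = a_1·p^{n−1} + ⋯ + a_n` with digits
`0 ≤ a_i ≤ p − 1`, if `a_1 ∈ I` then `k ∈ I_{p^n}` iff `(a_2 … a_n)_p ∈ I_{p^{n−1}}`,
and if `a_1 ∉ I` then `k ∈ I_{p^n}` iff `(c_2 … c_n)_p ∉ I_{p^{n−1}}` where
`c_i = p − 1 − a_i`. -/
theorem ISet_recursion (p n : ℕ) (hp : 2 ≤ p) (hn : 2 ≤ n)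
    (I : Finset ℕ) (hI : ∀ i ∈ I, i < p)
    (a : ℕ → ℕ) (ha : ∀ i, 1 ≤ i → i ≤ n → a i < p)
    (k : ℕ) (hk : k = ∑ i ∈ Finset.Icc 1 n, a i * p ^ (n - i)) :
    (a 1 ∈ I →
      (k ∈ ISet p I n ↔ (∑ i ∈ Finset.Icc 2 n, a i * p ^ (n - i)) ∈ ISet p I (n - 1))) ∧
    (a 1 ∉ I →
      (k ∈ ISet p I n ↔
        (∑ i ∈ Finset.Icc 2 n, (p - 1 - a i) * p ^ (n - i)) ∉ ISet p I (n - 1))) :=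
  ISet_recursion_general p n hp hn I a ha k hk
end
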